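/- Let A = 1 − q·m, Δ₁ = A² − 4h, h₁ = m − (q+1)·m², and suppose A > 0 and Δ₁ > 0; let x₆ = (A − √Δ₁)/2. If m ≥ A/2, or if m < A/2 and h < h₁, then x₆ < m; consequently the Jacobian matrix of F at E₆ = (x₆, m), which equals [[1 − 2x₆ − q·m, −q·x₆], [0, s·m·(1 − m/x₆)]], has eigenvalues 1 − 2x₆ − q·m > 0 and s·m·(1 − m/x₆) < 0, i.e. one positive and one negative real eigenvalue. -/

import Mathlib

/-- The predator–prey vector field
    `F(x,y) = (x(1-x) - q x y - h, s y (1 - y/x)(y - m))`. -/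
noncomputable def F (q s h m : ℝ) (p : ℝ × ℝ) : ℝ × ℝ :=
  (p.1 * (1 - p.1) - q * p.1 * p.2 - h, s * p.2 * (1 - p.2 / p.1) * (p.2 - m))

/-- The continuous linear map `ℝ² → ℝ²` with matrix `[[a, b], [c, d]]`. -/
noncomputable def clm (a b c d : ℝ) : (ℝ × ℝ) →L[ℝ] (ℝ × ℝ) :=
  (a • ContinuousLinearMap.fst ℝ ℝ ℝ + b • ContinuousLinearMap.snd ℝ ℝ ℝ).prod
    (c • ContinuousLinearMap.fst ℝ ℝ ℝ + d • ContinuousLinearMap.snd ℝ ℝ ℝ)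

/-
Write `A = 1 - q m`. Then `x₆` is the smaller root of `x² - A x + h`, so
`1 - 2x₆ - q m = A - 2x₆ = √Δ₁ > 0`, and `0 < x₆` because the roots have positive sum `A` and
product `h`. Since `h₁ = A m - m²`, the condition `h < h₁` says that the quadratic is negative at
`m`, so `m` lies strictly between its roots; if instead `m ≥ A/2`, then `x₆ < A/2 ≤ m`. With
`0 < x₆ < m` the second diagonal entry `s m (1 - m/x₆)` of the upper triangular Jacobian is negative.
-/

namespace Matrix

variable {K : Type*} [Field K]

theorem left_mem_spectrum_of_upperTriangular_fin_two (a b d : K) :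
    a ∈ spectrum K !![a, b; 0, d] := by
  rw [spectrum.mem_iff, isUnit_iff_isUnit_det, det_fin_two]
  simp [algebraMap_eq_diagonal]

theorem right_mem_spectrum_of_upperTriangular_fin_two (a b d : K) :
    d ∈ spectrum K !![a, b; 0, d] := by
  rw [spectrum.mem_iff, isUnit_iff_isUnit_det, det_fin_two]
  simp [algebraMap_eq_diagonal]

end Matrix

section SmallerRoot

variable {A h : ℝ}

theorem half_sub_sqrt_discrim_pos (hA : 0 < A) (hh : 0 < h) :
    0 < (A - √(A ^ 2 - 4 * h)) / 2 := by
  have : √(A ^ 2 - 4 * h) < A := (Real.sqrt_lt' hA).2 (by linarith)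
  linarith

theorem half_sub_sqrt_discrim_lt_half (hΔ : 0 < A ^ 2 - 4 * h) :
    (A - √(A ^ 2 - 4 * h)) / 2 < A / 2 := by
  have := Real.sqrt_pos.2 hΔ
  linarith

theorem half_sub_sqrt_discrim_lt_of_eval_neg {m : ℝ} (hm : m ^ 2 - A * m + h < 0) :
    (A - √(A ^ 2 - 4 * h)) / 2 < m := by
  have : A - 2 * m < √(A ^ 2 - 4 * h) := Real.lt_sqrt_of_sq_lt (by linarith)
  linarith

end SmallerRoot

theorem hasFDerivAt_F {q s h m x y : ℝ} (hx : x ≠ 0) :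
    HasFDerivAt (F q s h m)
      (clm (1 - 2 * x - q * y) (-q * x) (s * y ^ 2 * (y - m) / x ^ 2)
        (s * (1 - 2 * y / x) * (y - m) + s * y * (1 - y / x))) (x, y) := by
  have hprey := (((hasFDerivAt_fst (𝕜 := ℝ) (p := (x, y))).mul
      ((hasFDerivAt_const (1 : ℝ) _).sub hasFDerivAt_fst)).sub
      (((hasFDerivAt_const q _).mul hasFDerivAt_fst).mul hasFDerivAt_snd)).sub
      (hasFDerivAt_const h _)
  have hratio := (hasFDerivAt_snd (𝕜 := ℝ) (p := (x, y))).mul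
      ((hasFDerivAt_inv hx).comp (x, y) hasFDerivAt_fst)
  have hpred := (((hasFDerivAt_const s (x, y)).mul hasFDerivAt_snd).mul
      ((hasFDerivAt_const (1 : ℝ) _).sub hratio)).mul
      (hasFDerivAt_snd.sub (hasFDerivAt_const m _))
  simp only [div_eq_mul_inv]
  refine (hprey.prodMk hpred).congr_fderiv ?_
  ext <;> simp [clm] <;> field_simp <;> ring

theorem hasFDerivAt_F_at_y_eq_m {q s h m x : ℝ} (hx : x ≠ 0) :
    HasFDerivAt (F q s h m) (clm (1 - 2 * x - q * m) (-q * x) 0 (s * m * (1 - m / x))) (x, m) := by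
  convert hasFDerivAt_F (q := q) (s := s) (h := h) (m := m) (y := m) hx using 2
  · simp
  · ring

theorem stmt12_general (q s h m x6 : ℝ) (hs : 0 < s) (hh : 0 < h)
    (hm0 : 0 < m)
    (hA : 0 < 1 - q*m) (hΔ : 0 < (1 - q*m)^2 - 4*h)
    (hx6 : x6 = (1 - q*m - Real.sqrt ((1 - q*m)^2 - 4*h))/2)
    (hcond : (1 - q*m)/2 ≤ m ∨ (m < (1 - q*m)/2 ∧ h < m - (q+1)*m^2)) :
    x6 < m ∧
    HasFDerivAt (F q s h m)
      (clm (1 - 2*x6 - q*m) (-q*x6) 0 (s*m*(1 - m/x6))) ((x6, m) : ℝ × ℝ) ∧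
    (1 - 2*x6 - q*m) ∈ spectrum ℝ
      (!![1 - 2*x6 - q*m, -q*x6; 0, s*m*(1 - m/x6)] : Matrix (Fin 2) (Fin 2) ℝ) ∧
    (s*m*(1 - m/x6)) ∈ spectrum ℝ
      (!![1 - 2*x6 - q*m, -q*x6; 0, s*m*(1 - m/x6)] : Matrix (Fin 2) (Fin 2) ℝ) ∧
    0 < 1 - 2*x6 - q*m ∧ s*m*(1 - m/x6) < 0 := by
  have hx6_pos : 0 < x6 := hx6 ▸ half_sub_sqrt_discrim_pos hA hh
  have hx6_lt : x6 < m := by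
    rcases hcond with hle | ⟨-, hlt⟩
    · exact hx6 ▸ (half_sub_sqrt_discrim_lt_half hΔ).trans_le hle
    · exact hx6 ▸ half_sub_sqrt_discrim_lt_of_eval_neg (by linarith)
  refine ⟨hx6_lt, hasFDerivAt_F_at_y_eq_m hx6_pos.ne',
    Matrix.left_mem_spectrum_of_upperTriangular_fin_two _ _ _,
    Matrix.right_mem_spectrum_of_upperTriangular_fin_two _ _ _, ?_, ?_⟩
  · have := Real.sqrt_pos.2 hΔ
    rw [hx6]
    linarith
  · have : 1 - m / x6 < 0 := by rw [sub_neg, one_lt_div hx6_pos]; exact hx6_lt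
    exact mul_neg_of_pos_of_neg (mul_pos hs hm0) this

/-- With `A = 1 - q m > 0`, `Δ₁ = A² - 4h > 0`, `h₁ = m - (q+1)m²`, and
`x₆ = (A - √Δ₁)/2`: if `m ≥ A/2`, or `m < A/2` and `h < h₁`, then `x₆ < m`; the Jacobian
of `F` at `E₆ = (x₆, m)` is `[[1 - 2x₆ - q m, -q x₆], [0, s m (1 - m/x₆)]]` and has one
positive eigenvalue `1 - 2x₆ - q m` and one negative eigenvalue `s m (1 - m/x₆)`. -/
theorem stmt12 (q s h m x6 : ℝ) (hq : 0 < q) (hs : 0 < s) (hh : 0 < h)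
    (hm0 : 0 < m) (hm1 : m < 1)
    (hA : 0 < 1 - q*m) (hΔ : 0 < (1 - q*m)^2 - 4*h)
    (hx6 : x6 = (1 - q*m - Real.sqrt ((1 - q*m)^2 - 4*h))/2)
    (hcond : (1 - q*m)/2 ≤ m ∨ (m < (1 - q*m)/2 ∧ h < m - (q+1)*m^2)) :
    x6 < m ∧
    HasFDerivAt (F q s h m)
      (clm (1 - 2*x6 - q*m) (-q*x6) 0 (s*m*(1 - m/x6))) ((x6, m) : ℝ × ℝ) ∧
    (1 - 2*x6 - q*m) ∈ spectrum ℝ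
      (!![1 - 2*x6 - q*m, -q*x6; 0, s*m*(1 - m/x6)] : Matrix (Fin 2) (Fin 2) ℝ) ∧
    (s*m*(1 - m/x6)) ∈ spectrum ℝ
      (!![1 - 2*x6 - q*m, -q*x6; 0, s*m*(1 - m/x6)] : Matrix (Fin 2) (Fin 2) ℝ) ∧
    0 < 1 - 2*x6 - q*m ∧ s*m*(1 - m/x6) < 0 :=
  stmt12_general q s h m x6 hs hh hm0 hA hΔ hx6 hcond
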